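/- arXiv:2605.30588 — 2 statements merged into one kernel-verified Lean document; each statement's English description precedes it below -/
import Mathlib

section
/- Let {K_l} be operators on a finite-dimensional Hilbert space satisfying the completeness relation Σ_l K_l† K_l = I, and suppose that for a unit vector ψ and a unit vector φ we have Σ_l K_l |ψ⟩⟨ψ| K_l† = |φ⟩⟨φ|. Then for each l there exists a complex scalar c_l with K_l ψ = c_l φ, and Σ_l |c_l|² = 1. -/
/-!
Testing the identity `∑ₗ |Kₗψ⟩⟨Kₗψ| = |φ⟩⟨φ|` against a vector `x ⊥ φ` gives
`∑ₗ |⟪Kₗψ, x⟫|² = 0`, so every `Kₗψ` is orthogonal to `φᗮ`, i.e. lies in `ℂ ∙ φ`.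
Testing the completeness relation against `ψ` gives `∑ₗ ‖Kₗψ‖² = ‖ψ‖² = 1`.
-/

open scoped InnerProductSpace

variable {H : Type*} [NormedAddCommGroup H] [InnerProductSpace ℂ H] [FiniteDimensional ℂ H]

/-- The rank-one operator `|u⟩⟨v| : x ↦ ⟨v, x⟩ u`. -/
noncomputable def outer (u v : H) : H →ₗ[ℂ] H where
  toFun x := (inner ℂ v x : ℂ) • u
  map_add' x y := by simp [inner_add_right, add_smul]
  map_smul' c x := by simp [inner_smul_right, mul_smul]

section Outer

variable {E : Type*} [NormedAddCommGroup E] [InnerProductSpace ℂ E]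

@[simp]
theorem outer_apply (u v x : E) : outer u v x = ⟪v, x⟫_ℂ • u := rfl

theorem re_inner_outer_self_apply (u x : E) : (⟪x, outer u u x⟫_ℂ).re = ‖⟪u, x⟫_ℂ‖ ^ 2 := by
  rw [outer_apply, inner_smul_right, ← inner_conj_symm x u, Complex.mul_conj, Complex.ofReal_re,
    Complex.normSq_eq_norm_sq]

theorem comp_outer_comp_adjoint [FiniteDimensional ℂ E] (T S : E →ₗ[ℂ] E) (u v : E) :
    T ∘ₗ outer u v ∘ₗ LinearMap.adjoint S = outer (T u) (S v) := by
  ext x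
  simp [LinearMap.adjoint_inner_right]

theorem mem_span_singleton_of_sum_outer_self_eq {ι : Type*} [Fintype ι] {v : ι → E} {w : E}
    (h : ∑ l, outer (v l) (v l) = outer w w) (l : ι) : v l ∈ ℂ ∙ w := by
  rw [← Submodule.orthogonal_orthogonal (ℂ ∙ w), Submodule.mem_orthogonal]
  intro x hx
  have hxw : ⟪w, x⟫_ℂ = 0 := hx w (Submodule.mem_span_singleton_self w)
  have hsum : ∑ m, ‖⟪v m, x⟫_ℂ‖ ^ 2 = 0 := by
    have := congrArg (fun T : E →ₗ[ℂ] E => (⟪x, T x⟫_ℂ).re) h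
    simpa only [LinearMap.sum_apply, inner_sum, Complex.re_sum, re_inner_outer_self_apply, hxw,
      norm_zero, zero_pow two_ne_zero] using this
  have hl := (Finset.sum_eq_zero_iff_of_nonneg fun m _ => by positivity).mp hsum l
    (Finset.mem_univ l)
  exact inner_eq_zero_symm.mp (norm_eq_zero.mp (pow_eq_zero_iff two_ne_zero |>.mp hl))

theorem sum_norm_sq_apply_of_sum_adjoint_comp_self_eq_id [FiniteDimensional ℂ E] {ι : Type*}
    [Fintype ι] {K : ι → E →ₗ[ℂ] E} (h : ∑ l, LinearMap.adjoint (K l) ∘ₗ K l = LinearMap.id)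
    (x : E) : ∑ l, ‖K l x‖ ^ 2 = ‖x‖ ^ 2 := by
  have := congrArg (fun T : E →ₗ[ℂ] E => (⟪x, T x⟫_ℂ).re) h
  simpa only [LinearMap.sum_apply, LinearMap.comp_apply, LinearMap.id_apply, inner_sum,
    LinearMap.adjoint_inner_right, ← RCLike.re_to_complex, map_sum,
    inner_self_eq_norm_sq] using this

end Outer

theorem kraus_branches_proportional {ι : Type*} [Fintype ι]
    (K : ι → (H →ₗ[ℂ] H))
    (hcomplete : ∑ l, LinearMap.adjoint (K l) ∘ₗ K l = LinearMap.id)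
    (ψ φ : H) (hψ : ‖ψ‖ = 1) (hφ : ‖φ‖ = 1)
    (hmap : ∑ l, K l ∘ₗ outer ψ ψ ∘ₗ LinearMap.adjoint (K l) = outer φ φ) :
    ∃ c : ι → ℂ, (∀ l, K l ψ = c l • φ) ∧ ∑ l, ‖c l‖ ^ 2 = 1 := by
  simp only [comp_outer_comp_adjoint] at hmap
  choose c hc using fun l =>
    Submodule.mem_span_singleton.mp (mem_span_singleton_of_sum_outer_self_eq hmap l)
  refine ⟨c, fun l => (hc l).symm, ?_⟩
  calc ∑ l, ‖c l‖ ^ 2 = ∑ l, ‖K l ψ‖ ^ 2 := by simp [← hc, norm_smul, hφ]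
    _ = 1 := by rw [sum_norm_sq_apply_of_sum_adjoint_comp_self_eq_id hcomplete, hψ, one_pow]
end

section
/- Let Π_1, ..., Π_m be mutually orthogonal projections summing to the identity and let A be an operator such that for each α there exists β(α) with Π_{β(α)} A Π_α = A Π_α (i.e., A maps block α into block β(α)), where α ↦ β(α) is injective. Then Δ(A X A†) = A Δ(X) A† for every operator X, where Δ(X) = Σ_α Π_α X Π_α. -/
variable {H : Type*} [NormedAddCommGroup H] [InnerProductSpace ℂ H] [FiniteDimensional ℂ H]

/-- The block dephasing map `Δ(ρ) = Σ_α Π_α ρ Π_α`. -/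
noncomputable def blockDephase {m : ℕ} (P : Fin m → (H →ₗ[ℂ] H)) (ρ : H →ₗ[ℂ] H) :
    H →ₗ[ℂ] H :=
  ∑ α, P α ∘ₗ ρ ∘ₗ P α

/-!
The hypothesis `Π_{β(α)} A Π_α = A Π_α` upgrades to the intertwining relation
`Π_{β(α)} A = A Π_α`: inserting `1 = Σ_γ Π_γ` on the right of `Π_{β(α)} A`, every term with `γ ≠ α`
is `Π_{β(α)} Π_{β(γ)} A Π_γ = 0` by injectivity of `β`. Taking adjoints gives
`A† Π_{β(α)} = Π_α A†`, and since `β` is a permutation of the blocks, reindexing the sum defining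
`Δ(A X A†)` by `β` turns each term `Π_{β(α)} A X A† Π_{β(α)}` into `A Π_α X Π_α A†`.
-/

section BlockIntertwining

variable {R ι : Type*} [Fintype ι] {p : ι → R} {b : ι → ι} {a : R}

theorem block_mul_eq_mul_block [Semiring R] (hp : ∀ i j, i ≠ j → p i * p j = 0)
    (hsum : ∑ i, p i = 1) (hb : b.Injective) (hblock : ∀ i, p (b i) * a * p i = a * p i)
    (i : ι) : p (b i) * a = a * p i := by
  have hvanish : ∀ j, j ≠ i → p (b i) * a * p j = 0 := fun j hji =>
    calc p (b i) * a * p j = p (b i) * (p (b j) * a * p j) := by rw [hblock j, mul_assoc]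
      _ = p (b i) * p (b j) * (a * p j) := by simp only [mul_assoc]
      _ = 0 := by rw [hp _ _ (hb.ne hji.symm), zero_mul]
  calc p (b i) * a = ∑ j, p (b i) * a * p j := by rw [← Finset.mul_sum, hsum, mul_one]
    _ = p (b i) * a * p i := Fintype.sum_eq_single i hvanish
    _ = a * p i := hblock i

theorem sum_block_conj_eq_conj_sum_block [Semiring R] [StarRing R] (hp : ∀ i, star (p i) = p i)
    (hb : b.Bijective) (hleft : ∀ i, p (b i) * a = a * p i) (x : R) :
    ∑ i, p i * (a * x * star a) * p i = a * (∑ i, p i * x * p i) * star a := by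
  have hright : ∀ i, star a * p (b i) = p i * star a := fun i => by
    simpa only [star_mul, hp] using congrArg star (hleft i)
  rw [← hb.sum_comp, Finset.mul_sum, Finset.sum_mul]
  refine Finset.sum_congr rfl fun i _ => ?_
  calc p (b i) * (a * x * star a) * p (b i) = p (b i) * a * x * (star a * p (b i)) := by
        simp only [mul_assoc]
    _ = a * (p i * x * p i) * star a := by rw [hleft, hright]; simp only [mul_assoc]

end BlockIntertwining

theorem block_to_block_operator_dephasing_covariant {m : ℕ}
    (P : Fin m → (H →ₗ[ℂ] H))
    (hadj : ∀ α, LinearMap.adjoint (P α) = P α)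
    (horth : ∀ α β, P α ∘ₗ P β = if α = β then P α else 0)
    (hsum : ∑ α, P α = LinearMap.id)
    (A : H →ₗ[ℂ] H) (b : Fin m → Fin m) (hb : Function.Injective b)
    (hblock : ∀ α, P (b α) ∘ₗ A ∘ₗ P α = A ∘ₗ P α) :
    ∀ X : H →ₗ[ℂ] H,
      blockDephase P (A ∘ₗ X ∘ₗ LinearMap.adjoint A) =
        A ∘ₗ blockDephase P X ∘ₗ LinearMap.adjoint A := by
  intro X
  have hp : ∀ α β, α ≠ β → P α * P β = 0 := fun α β hne => by
    simpa [hne, Module.End.mul_eq_comp] using horth α β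
  have hleft : ∀ α, P (b α) * A = A * P α :=
    block_mul_eq_mul_block hp hsum hb fun α => by
      simpa only [Module.End.mul_eq_comp, LinearMap.comp_assoc] using hblock α
  have hcov := sum_block_conj_eq_conj_sum_block (fun α => (P α).star_eq_adjoint.trans (hadj α))
    (Finite.injective_iff_bijective.mp hb) hleft X
  simpa only [blockDephase, ← Module.End.mul_eq_comp, ← LinearMap.star_eq_adjoint,
    mul_assoc] using hcov
end
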